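/- arXiv:1306.2201 — 3 statements merged into one kernel-verified Lean document; each statement's English description precedes it below -/
import Mathlib

section
/- For P, Q > 0, define φ: (−π/2, π/2) → ℝ by φ(α) = arg(e^{−2iα}P + Q). Then |α + φ(α)| ≤ |α| for all α, with equality only when α = 0. -/
open Complex Real

lemma abs_arctan (x : ℝ) : |Real.arctan x| = Real.arctan |x| := by
  rcases le_or_gt 0 x with h | h
  · rw [_root_.abs_of_nonneg h, _root_.abs_of_nonneg (by simpa using Real.arctan_strictMono.monotone h)]
  · have h1 : Real.arctan x < 0 := by simpa using Real.arctan_strictMono h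
    rw [abs_of_neg h, abs_of_neg h1, Real.arctan_neg]

/-- For `P, Q > 0` and `φ(α) = arg(e^{−2iα} P + Q)`, one has
`|α + φ(α)| ≤ |α|`, with equality only when `α = 0`. -/
theorem iteration_step_contracts (P Q : ℝ) (hP : 0 < P) (hQ : 0 < Q)
    (α : ℝ) (hα : α ∈ Set.Ioo (-(π / 2)) (π / 2)) :
    |α + (Complex.exp (-2 * α * Complex.I) * P + Q).arg| ≤ |α| ∧
    (|α + (Complex.exp (-2 * α * Complex.I) * P + Q).arg| = |α| → α = 0) := by
  obtain ⟨hα1, hα2⟩ := hα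
  have hcosα : 0 < Real.cos α := Real.cos_pos_of_mem_Ioo ⟨hα1, hα2⟩
  set a : ℝ := (P + Q) * Real.cos α with ha
  set b : ℝ := (Q - P) * Real.sin α with hb
  have hapos : 0 < a := by positivity
  set x : ℝ := b / a with hx
  set β : ℝ := Real.arctan x with hβ
  have hβ1 : -(π / 2) < β := Real.neg_pi_div_two_lt_arctan x
  have hβ2 : β < π / 2 := Real.arctan_lt_pi_div_two x
  set ρ : ℝ := Real.sqrt (a ^ 2 + b ^ 2) with hρ
  have hρpos : 0 < ρ := Real.sqrt_pos.2 (by positivity)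
  have hdiv : 1 + x ^ 2 = (a ^ 2 + b ^ 2) / a ^ 2 := by
    rw [hx]; field_simp
  have hs : Real.sqrt (1 + x ^ 2) = ρ / a := by
    rw [hdiv, Real.sqrt_div (by positivity), hρ, Real.sqrt_sq hapos.le]
  have hcosβ : ρ * Real.cos β = a := by
    rw [hβ, Real.cos_arctan, hs]
    field_simp
  have hsinβ : ρ * Real.sin β = b := by
    rw [hβ, Real.sin_arctan, hs]
    field_simp
    rw [hx]; field_simp
  have key : Complex.exp (-2 * α * Complex.I) * P + Q
      = (ρ : ℂ) * (Complex.cos ((β - α : ℝ) : ℂ) + Complex.sin ((β - α : ℝ) : ℂ) * Complex.I) := by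
    have h1 : (-2 : ℂ) * α * Complex.I = ((-2 * α : ℝ) : ℂ) * Complex.I := by
      push_cast; ring
    rw [h1, Complex.exp_mul_I,
      ← Complex.ofReal_cos, ← Complex.ofReal_sin, ← Complex.ofReal_cos, ← Complex.ofReal_sin]
    have h2 : Real.cos (-2 * α) = Real.cos α ^ 2 - Real.sin α ^ 2 := by
      rw [show (-2 : ℝ) * α = -(2 * α) by ring, Real.cos_neg, Real.cos_two_mul', sq, sq]
    have h3 : Real.sin (-2 * α) = -(2 * Real.sin α * Real.cos α) := by
      rw [show (-2 : ℝ) * α = -(2 * α) by ring, Real.sin_neg, Real.sin_two_mul]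
    have e1 : Real.cos (-2 * α) * P + Q = ρ * Real.cos (β - α) := by
      rw [Real.cos_sub, h2, mul_add, ← mul_assoc, ← mul_assoc, hcosβ, hsinβ, ha, hb]
      linear_combination (-Q) * Real.sin_sq_add_cos_sq α
    have e2 : Real.sin (-2 * α) * P = ρ * Real.sin (β - α) := by
      rw [Real.sin_sub, h3, mul_sub, ← mul_assoc, ← mul_assoc, hsinβ, hcosβ, ha, hb]
      ring
    have e1c : ((Real.cos (-2 * α) : ℂ)) * P + Q = (ρ : ℂ) * (Real.cos (β - α) : ℂ) := by
      exact_mod_cast congrArg Complex.ofReal e1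
    have e2c : ((Real.sin (-2 * α) : ℂ)) * P = (ρ : ℂ) * (Real.sin (β - α) : ℂ) := by
      exact_mod_cast congrArg Complex.ofReal e2
    linear_combination e1c + Complex.I * e2c
  have harg : (Complex.exp (-2 * α * Complex.I) * P + Q).arg = β - α := by
    rw [key]
    exact Complex.arg_mul_cos_add_sin_mul_I hρpos
      ⟨by nlinarith [Real.pi_pos], by nlinarith [Real.pi_pos]⟩
  rw [harg, show α + (β - α) = β by ring]
  have hxval : x = (Q - P) / (P + Q) * Real.tan α := by
    rw [hx, ha, hb, Real.tan_eq_sin_div_cos]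
    field_simp
  have hc : |(Q - P) / (P + Q)| < 1 := by
    rw [abs_div, div_lt_one (by positivity : (0:ℝ) < |P + Q|),
      _root_.abs_of_pos (show (0:ℝ) < P + Q by linarith), abs_lt]
    constructor <;> linarith
  have hxabs : |x| ≤ |Real.tan α| := by
    rw [hxval, abs_mul]
    calc |(Q-P)/(P+Q)| * |Real.tan α| ≤ 1 * |Real.tan α| := by
          apply mul_le_mul_of_nonneg_right hc.le (abs_nonneg _)
      _ = |Real.tan α| := one_mul _
  have htα : |α| = Real.arctan |Real.tan α| := by
    rw [← abs_arctan, Real.arctan_tan hα1 hα2]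
  have hβabs : |β| = Real.arctan |x| := abs_arctan x
  constructor
  · rw [hβabs, htα]
    exact Real.arctan_strictMono.monotone hxabs
  · intro h
    by_contra hne
    have htne : Real.tan α ≠ 0 := by
      intro h0
      apply hne
      rw [← Real.arctan_tan hα1 hα2, h0, Real.arctan_zero]
    have hlt : |x| < |Real.tan α| := by
      rw [hxval, abs_mul]
      have : 0 < |Real.tan α| := abs_pos.2 htne
      nlinarith
    have : Real.arctan |x| < Real.arctan |Real.tan α| := Real.arctan_strictMono hlt
    rw [hβabs, htα] at h
    linarith
end

section
/- For P, Q > 0, define φ(α) = arg(e^{−2iα}P + Q) and the sequence α₀ = α ∈ (−π/2, π/2), α_{n+1} = α_n + φ(α_n). Then α_n converges to 0 as n → ∞. -/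
/-!
Factor `e^{-2iα} P + Q = e^{-iα} (P e^{-iα} + Q e^{iα})`. For `|α| < π/2` the second factor has
real part `(P + Q) cos α > 0` and imaginary part `(Q - P) sin α`, so its argument is
`arctan (k tan α)` with `k = (Q - P) / (Q + P)`, and the recursion becomes
`α_{n+1} = arctan (k tan α_n)`. Hence `tan α_n = kⁿ tan α₀`, and `|k| < 1` because `P, Q > 0`.
-/

namespace Complex

theorem arg_eq_arctan_of_re_pos {w : ℂ} (hw : 0 < w.re) : arg w = Real.arctan (w.im / w.re) := by
  have hlt : |arg w| < Real.pi / 2 := abs_arg_lt_pi_div_two_iff.2 (Or.inl hw)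
  rw [← tan_arg, Real.arctan_tan (abs_lt.1 hlt).1 (abs_lt.1 hlt).2]

theorem arg_mul_exp_mul_I {w : ℂ} (hw : w ≠ 0) {θ : ℝ}
    (h : arg w + θ ∈ Set.Ioc (-Real.pi) Real.pi) :
    arg (w * exp (θ * I)) = arg w + θ := by
  have hpolar : w * exp (θ * I) = ‖w‖ * exp (↑(arg w + θ) * I) := by
    conv_lhs => rw [← norm_mul_exp_arg_mul_I w]
    rw [mul_assoc, ← exp_add]
    push_cast
    ring_nf
  rw [hpolar, arg_real_mul _ (norm_pos_iff.2 hw), arg_exp_mul_I, toIocMod_eq_self]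
  simpa [two_mul, ← sub_eq_add_neg, add_comm] using h

end Complex

open Real Filter

theorem add_arg_exp_mul_add_eq_arctan {P Q : ℝ} (hPQ : 0 < P + Q) {α : ℝ}
    (hα : α ∈ Set.Ioo (-(π / 2)) (π / 2)) :
    α + (Complex.exp (-2 * α * Complex.I) * P + Q).arg =
      arctan ((Q - P) / (Q + P) * tan α) := by
  set w : ℂ := P * Complex.exp (↑(-α) * Complex.I) + Q * Complex.exp (α * Complex.I)
  have hcos : 0 < cos α := cos_pos_of_mem_Ioo hα
  have hre : w.re = (P + Q) * cos α := by
    simp only [w, Complex.add_re, Complex.re_ofReal_mul, Complex.exp_ofReal_mul_I_re, cos_neg]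
    ring
  have him : w.im = (Q - P) * sin α := by
    simp only [w, Complex.add_im, Complex.im_ofReal_mul, Complex.exp_ofReal_mul_I_im, sin_neg]
    ring
  have hwre : 0 < w.re := hre ▸ mul_pos hPQ hcos
  have hargw : w.arg = arctan ((Q - P) / (Q + P) * tan α) := by
    rw [Complex.arg_eq_arctan_of_re_pos hwre, hre, him, tan_eq_sin_div_cos, add_comm P Q]
    field_simp
  have hfactor : Complex.exp (-2 * α * Complex.I) * P + Q = w * Complex.exp (↑(-α) * Complex.I) := by
    simp only [w, add_mul, mul_assoc, ← Complex.exp_add]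
    push_cast
    ring_nf
    rw [Complex.exp_zero, mul_one]
  have hrange := arctan_mem_Ioo ((Q - P) / (Q + P) * tan α)
  rw [hfactor, Complex.arg_mul_exp_mul_I (fun h => hwre.ne' (by simp [h])), hargw]
  · ring
  · rw [hargw]
    constructor <;> linarith [hα.1, hα.2, hrange.1, hrange.2]

theorem eq_arctan_pow_mul_tan {k : ℝ} {a : ℕ → ℝ} (h0 : a 0 ∈ Set.Ioo (-(π / 2)) (π / 2))
    (hstep : ∀ n, a n ∈ Set.Ioo (-(π / 2)) (π / 2) → a (n + 1) = arctan (k * tan (a n)))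
    (n : ℕ) : a n = arctan (k ^ n * tan (a 0)) := by
  induction n with
  | zero => rw [pow_zero, one_mul, arctan_tan h0.1 h0.2]
  | succ n ih =>
    rw [hstep n (ih ▸ arctan_mem_Ioo _), ih, tan_arctan]
    ring_nf

theorem tendsto_arctan_pow_mul_nhds_zero {k : ℝ} (hk : |k| < 1) (t : ℝ) :
    Tendsto (fun n : ℕ => arctan (k ^ n * t)) atTop (nhds 0) := by
  have hpow : Tendsto (fun n : ℕ => k ^ n * t) atTop (nhds 0) := by
    simpa only [zero_mul] using (tendsto_pow_atTop_nhds_zero_of_abs_lt_one hk).mul_const t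
  simpa only [arctan_zero, Function.comp_def] using (continuous_arctan.tendsto 0).comp hpow

theorem abs_sub_div_add_lt_one {P Q : ℝ} (hP : 0 < P) (hQ : 0 < Q) : |(Q - P) / (Q + P)| < 1 := by
  rw [abs_div, abs_of_pos (add_pos hQ hP), div_lt_one (add_pos hQ hP), abs_sub_lt_iff]
  constructor <;> linarith

open Complex Real Filter

/-- For `P, Q > 0`, the iteration `α₀ = α ∈ (−π/2, π/2)`,
`α_{n+1} = α_n + arg(e^{−2iα_n} P + Q)` converges to `0`. -/
theorem iteration_converges (P Q : ℝ) (hP : 0 < P) (hQ : 0 < Q)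
    (a : ℕ → ℝ) (h0 : a 0 ∈ Set.Ioo (-(π / 2)) (π / 2))
    (hrec : ∀ n, a (n + 1) =
      a n + (Complex.exp (-2 * a n * Complex.I) * P + Q).arg) :
    Tendsto a atTop (nhds 0) := by
  have hstep (n : ℕ) (hn : a n ∈ Set.Ioo (-(π / 2)) (π / 2)) :
      a (n + 1) = Real.arctan ((Q - P) / (Q + P) * Real.tan (a n)) := by
    rw [hrec n, add_arg_exp_mul_add_eq_arctan (by linarith) hn]
  rw [funext (eq_arctan_pow_mul_tan h0 hstep)]
  exact tendsto_arctan_pow_mul_nhds_zero (abs_sub_div_add_lt_one hP hQ) _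
end

section
/- For the vector field v(r,φ) = e_1·e^{2iφ} in polar coordinates on the unit disc (identified with ℂ: v(z) = z²/|z|² for z ≠ 0), and its totally rotated copy u(z) = e^{iα}v(e^{−iα}z), the correlation ∫_{B₁(0)} conj(u(z))·v(z) dμ(z) equals π·e^{iα}. -/
open MeasureTheory Complex Real
open scoped ComplexConjugate

/-! Rotating `v(z) = z²/|z|²` by a unit `c` gives `v(c⁻¹ z) = c⁻² v(z)`, so
`conj(u) · v = c · conj(v) · v = c` with `c = e^{iα}`, because `|v| = 1` off the origin.
The integrand is therefore a.e. the constant `e^{iα}`, and the disc has area `π`. -/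

namespace Complex

theorem mul_sq_div_normSq_mul {c : ℂ} (hc : ‖c‖ = 1) (z : ℂ) :
    (c * z) ^ 2 / (normSq (c * z) : ℂ) = c ^ 2 * (z ^ 2 / (normSq z : ℂ)) := by
  rw [normSq_mul, normSq_eq_norm_sq c, hc]
  push_cast
  ring

theorem conj_sq_div_normSq_mul_sq_div_normSq {z : ℂ} (hz : z ≠ 0) :
    conj (z ^ 2 / (normSq z : ℂ)) * (z ^ 2 / (normSq z : ℂ)) = 1 := by
  have hnz : (normSq z : ℂ) ≠ 0 := ofReal_ne_zero.mpr (normSq_eq_zero.not.mpr hz)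
  rw [map_div₀, conj_ofReal, map_pow, div_mul_div_comm, ← mul_pow, mul_comm (conj z),
    mul_conj, ← sq, div_self (pow_ne_zero 2 hnz)]

theorem conj_mul_rotate_sq_div_normSq_mul {c z : ℂ} (hc : ‖c‖ = 1) (hz : z ≠ 0) :
    conj (c * ((c⁻¹ * z) ^ 2 / (normSq (c⁻¹ * z) : ℂ))) * (z ^ 2 / (normSq z : ℂ)) = c := by
  have hc₀ : c ≠ 0 := norm_ne_zero_iff.mp (hc ▸ one_ne_zero)
  have hcinv : ‖c⁻¹‖ = 1 := by rw [norm_inv, hc, inv_one]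
  rw [mul_sq_div_normSq_mul hcinv, ← mul_assoc, map_mul, mul_assoc,
    conj_sq_div_normSq_mul_sq_div_normSq hz, mul_one, sq, ← mul_assoc, mul_inv_cancel₀ hc₀,
    one_mul, ← inv_eq_conj hcinv, inv_inv]

end Complex

/-- For the counterexample field `v(z) = z²/|z|²` on the unit disc and its
totally rotated copy `u(z) = e^{iα} v(e^{−iα} z)`, the correlation over the
unit disc equals `π e^{iα}`. -/
theorem counterexample_correlation (α : ℝ) :
    (∫ z in Metric.ball (0 : ℂ) 1,
        (starRingEnd ℂ)
            (Complex.exp (α * Complex.I) *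
              ((Complex.exp (-(α : ℂ) * Complex.I) * z) ^ 2 /
                (Complex.normSq (Complex.exp (-(α : ℂ) * Complex.I) * z) : ℂ))) *
          (z ^ 2 / (Complex.normSq z : ℂ)) ∂volume) =
      (π : ℂ) * Complex.exp (α * Complex.I) := by
  have hc : ‖Complex.exp (α * Complex.I)‖ = 1 := norm_exp_ofReal_mul_I α
  have hconst : ∀ᵐ z ∂volume.restrict (Metric.ball (0 : ℂ) 1),
      (starRingEnd ℂ)
          (Complex.exp (α * Complex.I) *
            ((Complex.exp (-(α : ℂ) * Complex.I) * z) ^ 2 /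
              (Complex.normSq (Complex.exp (-(α : ℂ) * Complex.I) * z) : ℂ))) *
        (z ^ 2 / (Complex.normSq z : ℂ)) = Complex.exp (α * Complex.I) := by
    filter_upwards [ae_restrict_of_ae (volume.ae_ne (0 : ℂ))] with z hz
    rw [neg_mul, Complex.exp_neg]
    exact conj_mul_rotate_sq_div_normSq_mul hc hz
  rw [integral_congr_ae hconst, setIntegral_const, measureReal_def, Complex.volume_ball]
  simp [real_smul]
end
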